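/- arXiv:1705.05259 — 2 statements merged into one kernel-verified Lean document; each statement's English description precedes it below -/
import Mathlib

section
/- Let K be a compact connected Lie group and ρ : K → U(H) a strongly continuous unitary representation on a Hilbert space H that decomposes as the closure of an orthogonal direct sum of finite-dimensional subrepresentations (H_σ)_{σ∈S}. Let π denote the compression map A^K → B(H^K) on the algebra A^K of K-equivariant compact operators. Then for each σ ∈ S, each X in the Lie algebra 𝔨, and each n ≥ 1, the operator ∫_K ρ(k) σ(X)^n ρ(k)⁻¹ dk lies in ker(π), i.e., it is a compact K-equivariant operator vanishing on H^K. -/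
open MeasureTheory

/-- If `ρ k` is pointwise norm-preserving and strongly continuous, then `k ↦ ρ k (w k)`
is continuous for continuous `w`. -/
lemma cont_rho_apply {K H : Type*} [TopologicalSpace K]
    [NormedAddCommGroup H] [NormedSpace ℂ H]
    (ρ : K → (H →L[ℂ] H))
    (hunit : ∀ k (x : H), ‖ρ k x‖ = ‖x‖)
    (hcont : ∀ x : H, Continuous fun k => ρ k x)
    {w : K → H} (hw : Continuous w) :
    Continuous fun k => ρ k (w k) := by
  rw [continuous_iff_continuousAt]
  intro k₀
  have h1 : Filter.Tendsto (fun k => ρ k (w k - w k₀)) (nhds k₀) (nhds 0) := by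
    apply squeeze_zero_norm (fun k => le_of_eq (hunit k (w k - w k₀)))
    have h2 : Filter.Tendsto (fun k => w k - w k₀) (nhds k₀) (nhds 0) := by
      have := (hw.tendsto k₀).sub (tendsto_const_nhds (x := w k₀))
      simpa using this
    simpa using h2.norm
  have h3 : Filter.Tendsto (fun k => ρ k (w k - w k₀) + ρ k (w k₀)) (nhds k₀)
      (nhds (ρ k₀ (w k₀))) := by
    have := h1.add ((hcont (w k₀)).tendsto k₀)
    simpa using this
  have h4 : (fun k => ρ k (w k - w k₀) + ρ k (w k₀)) = fun k => ρ k (w k) := by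
    funext k
    rw [← map_add]
    simp
  rw [h4] at h3
  exact h3

/-- Setting of Theorem 3.2: `K` a compact connected Lie group with Lie algebra `𝔨`,
`ρ : K → U(H)` a strongly continuous unitary representation, and `H` the orthogonal closed
direct sum of finite-dimensional invariant subspaces `(Hsub s)_{s ∈ S}`.  For each `s ∈ S`
and `X ∈ 𝔨`, let `T s X` denote the compression to `Hsub s` of the infinitesimal generator
of `ρ` in direction `X` (extended to `H` by zero on the orthogonal complement).  Then for
every `n ≥ 1` the operator `c` defined strongly by `c v = ∫ k, ρ k ((T s X)ⁿ (ρ k⁻¹ v)) dμ`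
lies in `ker π`: it is a compact `K`-equivariant operator vanishing on `H^K`. -/
theorem stmt_8 {K : Type*} [Group K] [TopologicalSpace K] [IsTopologicalGroup K]
    [CompactSpace K] [ConnectedSpace K]
    [MeasurableSpace K] [BorelSpace K]
    (μ : Measure K) [IsProbabilityMeasure μ] [μ.IsMulLeftInvariant] [μ.IsMulRightInvariant]
    {𝔨 : Type*} [LieRing 𝔨] [LieAlgebra ℝ 𝔨] (expK : 𝔨 → K)
    {H : Type*} [NormedAddCommGroup H] [InnerProductSpace ℂ H] [CompleteSpace H]
    (ρ : K →* (H →L[ℂ] H))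
    (hunit : ∀ k (x : H), ‖ρ k x‖ = ‖x‖)
    (hcont : ∀ x : H, Continuous fun k => ρ k x)
    {S : Type*} (Hsub : S → Submodule ℂ H)
    (hfin : ∀ s, FiniteDimensional ℂ (Hsub s))
    (hinv : ∀ s, ∀ k, ∀ v ∈ Hsub s, ρ k v ∈ Hsub s)
    (horth : ∀ s s', s ≠ s' → ∀ v ∈ Hsub s, ∀ w ∈ Hsub s', inner ℂ v w = (0 : ℂ))
    (hdense : (⨆ s, Hsub s).topologicalClosure = ⊤)
    (T : S → 𝔨 → (H →L[ℂ] H))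
    (hT_range : ∀ s X (v : H), T s X v ∈ Hsub s)
    (hT_perp : ∀ s X, ∀ v ∈ (Hsub s)ᗮ, T s X v = 0)
    (hT_deriv : ∀ s X, ∀ v ∈ Hsub s,
      HasDerivAt (fun t : ℝ => ρ (expK (t • X)) v) (T s X v) 0)
    (s : S) (X : 𝔨) (n : ℕ) (hn : 1 ≤ n)
    (c : H →L[ℂ] H) (hc : ∀ v : H, c v = ∫ k, ρ k ((T s X ^ n) (ρ k⁻¹ v)) ∂μ) :
    IsCompactOperator c ∧ (∀ h : K, (ρ h).comp c = c.comp (ρ h)) ∧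
      ∀ v : H, (∀ k, ρ k v = v) → c v = 0 := by
  haveI := hfin s
  obtain ⟨m, rfl⟩ : ∃ m, n = m + 1 := ⟨n - 1, (Nat.succ_pred_eq_of_pos hn).symm⟩
  set n := m + 1 with hn_def
  -- basic facts about ρ
  have hmul : ∀ (k k' : K) (x : H), ρ k (ρ k' x) = ρ (k * k') x := by
    intro k k' x
    rw [map_mul]
    rfl
  have hone : ∀ x : H, ρ 1 x = x := by
    intro x; rw [map_one]; rfl
  have hinvinv : ∀ (k : K) (x : H), ρ k (ρ k⁻¹ x) = x := by
    intro k x; rw [hmul, mul_inv_cancel, hone]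
  have hinner : ∀ (k : K) (x y : H), inner ℂ (ρ k x) (ρ k y) = (inner ℂ x y : ℂ) := by
    intro k x y
    exact (LinearIsometry.mk ((ρ k : H →L[ℂ] H) : H →ₗ[ℂ] H) (hunit k)).inner_map_map x y
  -- integrand is continuous, hence integrable
  have hgcont : ∀ v : H, Continuous fun k => ρ k ((T s X ^ n) (ρ k⁻¹ v)) := by
    intro v
    apply cont_rho_apply (fun k => ρ k) hunit hcont
    exact (T s X ^ n).continuous.comp ((hcont v).comp continuous_inv)
  have hInt : ∀ v : H, Integrable (fun k => ρ k ((T s X ^ n) (ρ k⁻¹ v))) μ := by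
    intro v
    apply (hgcont v).integrable_of_hasCompactSupport
    exact IsCompact.of_isClosed_subset isCompact_univ (isClosed_tsupport _) (Set.subset_univ _)
  -- integrand lies in Hsub s
  have hpowmem : ∀ w : H, (T s X ^ n) w ∈ Hsub s := by
    intro w
    rw [pow_succ']
    exact hT_range s X _
  have hgmem : ∀ (v : H) (k : K), ρ k ((T s X ^ n) (ρ k⁻¹ v)) ∈ Hsub s := by
    intro v k
    exact hinv s k _ (hpowmem _)
  -- hence c v ∈ Hsub s
  have hmem : ∀ v : H, c v ∈ Hsub s := by
    intro v
    set P := (Hsub s).orthogonalProjectionOnto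
    have h1 : (fun k => ρ k ((T s X ^ n) (ρ k⁻¹ v)))
        = fun k => (Hsub s).subtypeL (P (ρ k ((T s X ^ n) (ρ k⁻¹ v)))) := by
      funext k
      simp only [Submodule.subtypeL_apply]
      exact (Submodule.starProjection_eq_self_iff.mpr (hgmem v k)).symm
    rw [hc, h1, ContinuousLinearMap.integral_comp_comm _ (P.integrable_comp (hInt v))]
    exact Submodule.coe_mem _
  constructor
  · -- compactness: range is in the finite-dimensional subspace Hsub s
    haveI : ProperSpace (Hsub s) := FiniteDimensional.proper ℂ (Hsub s)
    refine ⟨(fun x : Hsub s => (x : H)) '' Metric.closedBall 0 ‖c‖,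
      (isCompact_closedBall _ _).image continuous_subtype_val, ?_⟩
    apply Filter.mem_of_superset (Metric.closedBall_mem_nhds (0 : H) one_pos)
    intro v hv
    refine ⟨⟨c v, hmem v⟩, ?_, rfl⟩
    rw [Metric.mem_closedBall, dist_zero_right]
    calc ‖(⟨c v, hmem v⟩ : Hsub s)‖ = ‖c v‖ := rfl
      _ ≤ ‖c‖ * ‖v‖ := c.le_opNorm v
      _ ≤ ‖c‖ * 1 := by
          apply mul_le_mul_of_nonneg_left _ (norm_nonneg c)
          simpa [Metric.mem_closedBall, dist_zero_right] using hv
      _ = ‖c‖ := mul_one _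
  constructor
  · -- equivariance
    intro h
    ext v
    simp only [ContinuousLinearMap.comp_apply]
    calc ρ h (c v) = ∫ k, ρ h (ρ k ((T s X ^ n) (ρ k⁻¹ v))) ∂μ := by
          rw [hc]
          exact ((ρ h).integral_comp_comm (hInt v)).symm
      _ = ∫ k, (fun k => ρ k ((T s X ^ n) (ρ k⁻¹ (ρ h v)))) (h * k) ∂μ := by
          congr 1
          funext k
          simp only
          rw [← hmul h k, mul_inv_rev, ← hmul k⁻¹ h⁻¹, hmul h⁻¹ h, inv_mul_cancel, hone]
      _ = ∫ k, ρ k ((T s X ^ n) (ρ k⁻¹ (ρ h v))) ∂μ := by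
          simpa using
            integral_mul_left_eq_self (μ := μ)
              (fun k => ρ k ((T s X ^ n) (ρ k⁻¹ (ρ h v)))) h
      _ = c (ρ h v) := (hc _).symm
  · -- vanishing on invariant vectors
    intro v hv
    set a : H := ((Hsub s).orthogonalProjectionOnto v : H) with ha_def
    have ha : a ∈ Hsub s := Submodule.coe_mem _
    have hb : v - a ∈ (Hsub s)ᗮ := (Hsub s).sub_starProjection_mem_orthogonal v
    -- a is invariant
    have hainv : ∀ k, ρ k a = a := by
      intro k
      have hdiff : ρ k a - a ∈ Hsub s := Submodule.sub_mem _ (hinv s k a ha) ha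
      have hdiff' : ρ k a - a ∈ (Hsub s)ᗮ := by
        have h5 : ρ k a + ρ k (v - a) = a + (v - a) := by
          calc ρ k a + ρ k (v - a) = ρ k (a + (v - a)) := (map_add _ _ _).symm
            _ = ρ k v := by congr 1; abel
            _ = v := hv k
            _ = a + (v - a) := by abel
        have heq : ρ k a - a = (v - a) - ρ k (v - a) := by
          apply eq_sub_of_add_eq
          rw [sub_add_eq_add_sub, h5]
          abel
        rw [heq]
        apply Submodule.sub_mem _ hb
        rw [Submodule.mem_orthogonal]
        intro u hu
        have h8 : inner ℂ (ρ k⁻¹ u) (v - a) = (0 : ℂ) :=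
          (Submodule.mem_orthogonal _ _).mp hb _ (hinv s k⁻¹ u hu)
        calc inner ℂ u (ρ k (v - a)) = (inner ℂ (ρ k (ρ k⁻¹ u)) (ρ k (v - a)) : ℂ) := by
              rw [hinvinv]
          _ = inner ℂ (ρ k⁻¹ u) (v - a) := hinner k _ _
          _ = 0 := h8
      have := (Submodule.orthogonal_disjoint (Hsub s)).le_bot ⟨hdiff, hdiff'⟩
      rw [Submodule.mem_bot] at this
      exact sub_eq_zero.mp this
    -- T s X v = T s X a = 0
    have hTva : T s X v = T s X a := by
      have h0 : T s X (v - a) = 0 := hT_perp s X _ hb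
      rw [map_sub, sub_eq_zero] at h0
      exact h0
    have hTa0 : T s X a = 0 := by
      have h1 := hT_deriv s X a ha
      simp only [hainv] at h1
      exact h1.unique (hasDerivAt_const 0 a)
    have hTn : (T s X ^ n) v = 0 := by
      rw [pow_succ, ContinuousLinearMap.mul_apply, hTva, hTa0, map_zero]
    rw [hc]
    simp only [hv, hTn, map_zero, integral_zero]
end

section
/- Under the hypotheses of the preceding setting, if b is a K-equivariant compact operator on H that vanishes on H^K, then b = b(Id_H − p), where p = ∫_K ρ(k) dk is the orthogonal projection onto H^K, and b(Id_H − p) = ∑_{σ∈S} b ∫_K (p_σ − σ(k)) dk with the series converging in operator norm. -/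
open MeasureTheory Filter Metric Topology

section Aux
lemma aux_small_comp {E E' : Type*} [NormedAddCommGroup E] [NormedSpace ℂ E]
    [NormedAddCommGroup E'] [NormedSpace ℂ E'] {ι : Type*} {l : Filter ι}
    (c : E →L[ℂ] E') (hc : IsCompactOperator c) (T : ι → (E' →L[ℂ] E'))
    (hT : ∀ i, ‖T i‖ ≤ 1) (h0 : ∀ y, Tendsto (fun i => T i y) l (𝓝 0)) :
    Tendsto (fun i => ‖(T i).comp c‖) l (𝓝 0) := by
  obtain ⟨K0, hK0, hK0nhds⟩ := hc
  obtain ⟨r, hr, hball⟩ := Metric.mem_nhds_iff.mp hK0nhds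
  rw [Metric.tendsto_nhds]
  intro ε hε
  set ε' : ℝ := ε * r / 8 with hε'def
  have hε' : 0 < ε' := by positivity
  obtain ⟨t, htfin, htcov⟩ := totallyBounded_iff.mp hK0.totallyBounded ε' hε'
  have hev : ∀ᶠ i in l, ∀ y ∈ t, ‖T i y‖ < ε' := by
    rw [eventually_all_finite htfin]
    intro y _
    have := Metric.tendsto_nhds.mp (h0 y) ε' hε'
    simpa [dist_zero_right] using this
  filter_upwards [hev] with i hi
  rw [Real.dist_eq, sub_zero, abs_of_nonneg (norm_nonneg _)]
  have hbound : ∀ x : E, ‖x‖ < r → ‖T i (c x)‖ ≤ 2 * ε' := by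
    intro x hx
    have hcx : c x ∈ K0 := hball (by simpa [dist_zero_right] using hx)
    obtain ⟨y, hyt, hy⟩ := Set.mem_iUnion₂.mp (htcov hcx)
    have h1 : ‖T i (c x - y)‖ ≤ ‖c x - y‖ := by
      calc ‖T i (c x - y)‖ ≤ ‖T i‖ * ‖c x - y‖ := (T i).le_opNorm _
        _ ≤ 1 * ‖c x - y‖ := by gcongr; exact hT i
        _ = ‖c x - y‖ := one_mul _
    have h2 : ‖c x - y‖ < ε' := by rwa [← dist_eq_norm]
    calc ‖T i (c x)‖ = ‖T i (c x - y) + T i y‖ := by rw [← map_add, sub_add_cancel]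
      _ ≤ ‖T i (c x - y)‖ + ‖T i y‖ := norm_add_le _ _
      _ ≤ ε' + ε' := add_le_add (le_of_lt (lt_of_le_of_lt h1 h2)) (le_of_lt (hi y hyt))
      _ = 2 * ε' := by ring
  have hop : ‖(T i).comp c‖ ≤ 4 * ε' / r := by
    apply ContinuousLinearMap.opNorm_le_bound _ (by positivity)
    intro x
    rcases eq_or_ne x 0 with rfl | hx0
    · simp
    · have hxn : 0 < ‖x‖ := norm_pos_iff.mpr hx0
      set a : ℝ := r / (2 * ‖x‖) with hadef
      have ha : 0 < a := by positivity
      have hz : ‖(a : ℂ) • x‖ < r := by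
        rw [norm_smul, Complex.norm_real, Real.norm_eq_abs, abs_of_pos ha, hadef,
          div_mul_eq_mul_div, div_lt_iff₀ (by positivity)]
        nlinarith
      have := hbound ((a : ℂ) • x) hz
      rw [_root_.map_smul, _root_.map_smul, norm_smul, Complex.norm_real, Real.norm_eq_abs, abs_of_pos ha] at this
      have hfx : ‖((T i).comp c) x‖ ≤ 2 * ε' / a := by
        rw [ContinuousLinearMap.comp_apply]
        rw [le_div_iff₀ ha, mul_comm]
        exact this
      calc ‖((T i).comp c) x‖ ≤ 2 * ε' / a := hfx
        _ = 4 * ε' / r * ‖x‖ := by rw [hadef]; field_simp; ring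
  calc ‖(T i).comp c‖ ≤ 4 * ε' / r := hop
    _ = ε / 2 := by rw [hε'def]; field_simp; ring
    _ < ε := by linarith
end Aux

/-- Let `ρ` be a strongly continuous unitary representation of a compact group `K` on `H`,
with `H` the orthogonal closed direct sum of finite-dimensional invariant subspaces
`(Hsub s)_{s ∈ S}` with orthogonal projections `Psub s`, and let
`σ(k) := Psub s ∘ ρ k ∘ Psub s`.  If `b` is a `K`-equivariant compact operator vanishing on
`H^K`, `p = ∫ ρ(k) dk` is the projection onto `H^K`, and `q s = ∫ (Psub s − σ(k)) dk`
(all integrals taken strongly), then `b = b (1 − p)` and `b = ∑_{s ∈ S} b (q s)`, the series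
converging in operator norm. -/
theorem stmt_9 {K : Type*} [Group K] [TopologicalSpace K] [IsTopologicalGroup K] [CompactSpace K]
    [MeasurableSpace K] [BorelSpace K]
    (μ : Measure K) [IsProbabilityMeasure μ] [μ.IsMulLeftInvariant] [μ.IsMulRightInvariant]
    {H : Type*} [NormedAddCommGroup H] [InnerProductSpace ℂ H] [CompleteSpace H]
    (ρ : K →* (H →L[ℂ] H))
    (hunit : ∀ k (x : H), ‖ρ k x‖ = ‖x‖)
    (hcont : ∀ x : H, Continuous fun k => ρ k x)
    {S : Type*} (Hsub : S → Submodule ℂ H)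
    (hfin : ∀ s, FiniteDimensional ℂ (Hsub s))
    (hinv : ∀ s, ∀ k, ∀ v ∈ Hsub s, ρ k v ∈ Hsub s)
    (horth : ∀ s s', s ≠ s' → ∀ v ∈ Hsub s, ∀ w ∈ Hsub s', inner ℂ v w = (0 : ℂ))
    (hdense : (⨆ s, Hsub s).topologicalClosure = ⊤)
    (Psub : S → (H →L[ℂ] H))
    (hP_mem : ∀ s (v : H), Psub s v ∈ Hsub s)
    (hP_fix : ∀ s, ∀ v ∈ Hsub s, Psub s v = v)
    (hP_perp : ∀ s, ∀ v ∈ (Hsub s)ᗮ, Psub s v = 0)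
    (p : H →L[ℂ] H) (hp : ∀ v : H, p v = ∫ k, ρ k v ∂μ)
    (q : S → (H →L[ℂ] H))
    (hq : ∀ s (v : H), q s v = ∫ k, (Psub s v - Psub s (ρ k (Psub s v))) ∂μ)
    (b : H →L[ℂ] H) (hbcpt : IsCompactOperator b)
    (hbeq : ∀ k, (ρ k).comp b = b.comp (ρ k))
    (hbker : ∀ v : H, (∀ k, ρ k v = v) → b v = 0) :
    b = b * (1 - p) ∧ HasSum (fun s => b * q s) b := by
  classical
  -- integrability of orbit maps
  have hInt : ∀ v : H, Integrable (fun k => ρ k v) μ := fun v =>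
    (hcont v).integrable_of_hasCompactSupport (HasCompactSupport.of_compactSpace _)
  -- p v is K-invariant
  have hpinv : ∀ (v : H) (k' : K), ρ k' (p v) = p v := by
    intro v k'
    rw [hp v, ← ContinuousLinearMap.integral_comp_comm (ρ k') (hInt v)]
    have h1 : (fun k => ρ k' (ρ k v)) = fun k => ρ (k' * k) v := by
      funext k; rw [map_mul]; rfl
    rw [h1, MeasureTheory.integral_mul_left_eq_self (fun k => ρ k v) k']
  have hbp : ∀ w : H, b (p w) = 0 := fun w => hbker _ (fun k => hpinv w k)
  -- first conjunct
  have h1 : b = b * (1 - p) := by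
    ext v
    simp only [ContinuousLinearMap.mul_apply, ContinuousLinearMap.sub_apply,
      ContinuousLinearMap.one_apply, map_sub, hbp, sub_zero]
  -- projection facts
  have hPO : ∀ s t, t ≠ s → ∀ v : H, Psub t (Psub s v) = 0 := by
    intro s t hts v
    exact hP_perp t _ ((Submodule.mem_orthogonal _ _).mpr
      (fun u hu => horth t s hts u hu _ (hP_mem s v)))
  have hPP : ∀ s (v : H), Psub s (Psub s v) = Psub s v := fun s v =>
    hP_fix s _ (hP_mem s v)
  have hPperp' : ∀ s (v : H), v - Psub s v ∈ (Hsub s)ᗮ := by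
    intro s v
    haveI := hfin s
    haveI : CompleteSpace (Hsub s) := FiniteDimensional.complete ℂ _
    have hva : v - (Submodule.orthogonalProjection (Hsub s) v : H) ∈ (Hsub s)ᗮ :=
      Submodule.sub_starProjection_mem_orthogonal (K := Hsub s) v
    have hPv : Psub s v = (Submodule.orthogonalProjection (Hsub s) v : H) := by
      have hd : v = (Submodule.orthogonalProjection (Hsub s) v : H) +
          (v - (Submodule.orthogonalProjection (Hsub s) v : H)) := by abel
      calc Psub s v = Psub s ((Submodule.orthogonalProjection (Hsub s) v : H) +
            (v - (Submodule.orthogonalProjection (Hsub s) v : H))) := by rw [← hd]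
        _ = Psub s ((Submodule.orthogonalProjection (Hsub s) v : H)) +
            Psub s (v - (Submodule.orthogonalProjection (Hsub s) v : H)) := map_add _ _ _
        _ = (Submodule.orthogonalProjection (Hsub s) v : H) := by
            rw [hP_fix s _ (SetLike.coe_mem _), hP_perp s _ hva, add_zero]
    rw [hPv]; exact hva
  have hPsa : ∀ s (v w : H), (inner ℂ (Psub s v) w : ℂ) = inner ℂ v (Psub s w) := by
    intro s v w
    have e1 : (inner ℂ (Psub s v) w : ℂ) = inner ℂ (Psub s v) (Psub s w) := by
      conv_lhs => rw [show w = Psub s w + (w - Psub s w) by abel]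
      rw [inner_add_right, Submodule.inner_right_of_mem_orthogonal (hP_mem s v)
        (hPperp' s w), add_zero]
    have e2 : (inner ℂ v (Psub s w) : ℂ) = inner ℂ (Psub s v) (Psub s w) := by
      conv_lhs => rw [show v = Psub s v + (v - Psub s v) by abel]
      rw [inner_add_left, Submodule.inner_left_of_mem_orthogonal (hP_mem s w)
        (hPperp' s v), add_zero]
    rw [e1, e2]
  -- the finite partial sums of projections
  set Pf : Finset S → (H →L[ℂ] H) := fun F => ∑ s ∈ F, Psub s with hPfdef
  have hPfapp : ∀ F (v : H), Pf F v = ∑ s ∈ F, Psub s v := by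
    intro F v; simp [hPfdef, ContinuousLinearMap.sum_apply]
  have hPfsa : ∀ F (v w : H), (inner ℂ (Pf F v) w : ℂ) = inner ℂ v (Pf F w) := by
    intro F v w
    rw [hPfapp, hPfapp, sum_inner, inner_sum]
    exact Finset.sum_congr rfl fun s _ => hPsa s v w
  have hPfP : ∀ F (v : H), Pf F (Pf F v) = Pf F v := by
    intro F v
    calc Pf F (Pf F v) = ∑ s ∈ F, Psub s (Pf F v) := hPfapp F _
      _ = ∑ s ∈ F, Psub s v := Finset.sum_congr rfl fun s hs => by
          rw [hPfapp F v, map_sum,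
            Finset.sum_eq_single_of_mem s hs (fun t _ hts => hPO t s hts.symm v)]
          exact hPP s v
      _ = Pf F v := (hPfapp F v).symm
  -- contraction property of self-adjoint idempotents
  have hcontr : ∀ (Q : H →L[ℂ] H), (∀ v w : H, (inner ℂ (Q v) w : ℂ) = inner ℂ v (Q w)) →
      (∀ v : H, Q (Q v) = Q v) → ∀ v : H, ‖Q v‖ ≤ ‖v‖ := by
    intro Q hsa hid v
    rcases eq_or_lt_of_le (norm_nonneg (Q v)) with h0 | h0
    · rw [← h0]; exact norm_nonneg v
    have key : ‖Q v‖ * ‖Q v‖ ≤ ‖v‖ * ‖Q v‖ := by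
      have e1 : (inner ℂ (Q v) (Q v) : ℂ) = inner ℂ v (Q v) := by
        rw [hsa v (Q v), hid v]
      calc ‖Q v‖ * ‖Q v‖ = RCLike.re (inner ℂ (Q v) (Q v) : ℂ) :=
            (inner_self_eq_norm_mul_norm (𝕜 := ℂ) (Q v)).symm
        _ = RCLike.re (inner ℂ v (Q v) : ℂ) := by rw [e1]
        _ ≤ ‖(inner ℂ v (Q v) : ℂ)‖ := RCLike.re_le_norm _
        _ ≤ ‖v‖ * ‖Q v‖ := norm_inner_le_norm _ _
    exact le_of_mul_le_mul_right key h0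
  have hQid : ∀ F (v : H), (1 - Pf F) ((1 - Pf F) v) = (1 - Pf F) v := by
    intro F v
    simp only [ContinuousLinearMap.sub_apply, ContinuousLinearMap.one_apply, map_sub]
    rw [hPfP]; abel
  have hQsa : ∀ F (v w : H), (inner ℂ ((1 - Pf F) v) w : ℂ) = inner ℂ v ((1 - Pf F) w) := by
    intro F v w
    simp only [ContinuousLinearMap.sub_apply, ContinuousLinearMap.one_apply]
    rw [inner_sub_left, inner_sub_right, hPfsa]
  have hQcontr : ∀ F (v : H), ‖(1 - Pf F) v‖ ≤ ‖v‖ := fun F =>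
    hcontr _ (hQsa F) (hQid F)
  have hPcontr : ∀ F (v : H), ‖Pf F v‖ ≤ ‖v‖ := fun F =>
    hcontr _ (fun v w => hPfsa F v w) (hPfP F)
  have hQnorm : ∀ F, ‖(1 : H →L[ℂ] H) - Pf F‖ ≤ 1 := fun F =>
    ContinuousLinearMap.opNorm_le_bound _ zero_le_one (fun v => by rw [one_mul]; exact hQcontr F v)
  -- eventual fixing on the algebraic direct sum
  have hD : ∀ v ∈ (⨆ s, Hsub s : Submodule ℂ H), ∃ F₀ : Finset S, ∀ F, F₀ ⊆ F → Pf F v = v := by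
    intro v hv
    induction hv using Submodule.iSup_induction' with
    | mem s x hx =>
        refine ⟨{s}, fun F hF => ?_⟩
        have hsF : s ∈ F := hF (Finset.mem_singleton_self s)
        rw [hPfapp, Finset.sum_eq_single_of_mem s hsF]
        · exact hP_fix s x hx
        · intro t _ hts
          exact hP_perp t _ ((Submodule.mem_orthogonal _ _).mpr
            (fun u hu => horth t s hts u hu x hx))
    | zero => exact ⟨∅, fun F _ => map_zero _⟩
    | add x hx y hy ihx ihy =>
        obtain ⟨F₁, h₁⟩ := ihx
        obtain ⟨F₂, h₂⟩ := ihy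
        exact ⟨F₁ ∪ F₂, fun F hF => by
          rw [map_add, h₁ F (Finset.union_subset_iff.mp hF).1,
            h₂ F (Finset.union_subset_iff.mp hF).2]⟩
  -- strong convergence of Pf to the identity
  have hstrong : ∀ v : H, Tendsto (fun F : Finset S => Pf F v) atTop (𝓝 v) := by
    intro v
    rw [Metric.tendsto_nhds]
    intro ε hε
    have hv : v ∈ closure ((⨆ s, Hsub s : Submodule ℂ H) : Set H) := by
      rw [← Submodule.topologicalClosure_coe, hdense]; trivial
    obtain ⟨w, hwD, hwv⟩ := Metric.mem_closure_iff.mp hv (ε / 2) (by linarith)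
    obtain ⟨F₀, hF₀⟩ := hD w hwD
    rw [eventually_atTop]
    refine ⟨F₀, fun F hF => ?_⟩
    have hPfw := hF₀ F hF
    have : Pf F v - v = Pf F (v - w) + (w - v) := by
      rw [map_sub, hPfw]; abel
    rw [dist_eq_norm, this]
    calc ‖Pf F (v - w) + (w - v)‖ ≤ ‖Pf F (v - w)‖ + ‖w - v‖ := norm_add_le _ _
      _ ≤ ‖v - w‖ + ‖w - v‖ := by
          gcongr
          exact hPcontr F (v - w)
      _ < ε := by
          rw [norm_sub_rev v w]
          have : ‖w - v‖ < ε / 2 := by rw [← dist_eq_norm']; exact hwv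
          rw [norm_sub_rev w v] at this ⊢
          linarith [this]
  have hstrong0 : ∀ y : H, Tendsto (fun F : Finset S => ((1 : H →L[ℂ] H) - Pf F) y)
      atTop (𝓝 0) := by
    intro y
    have h := Filter.Tendsto.sub
      (tendsto_const_nhds : Tendsto (fun _ : Finset S => y) atTop (𝓝 y)) (hstrong y)
    rw [sub_self] at h
    simp only [ContinuousLinearMap.sub_apply, ContinuousLinearMap.one_apply]
    exact h
  -- the compact operator b† b
  set cop : H →L[ℂ] H := (ContinuousLinearMap.adjoint b).comp b with hcopdef
  have hccpt : IsCompactOperator cop := by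
    have := hbcpt.continuous_comp (ContinuousLinearMap.adjoint b).continuous
    rwa [hcopdef, ContinuousLinearMap.coe_comp']
  have hnorm0 : Tendsto (fun F : Finset S => ‖((1 : H →L[ℂ] H) - Pf F).comp cop‖)
      atTop (𝓝 0) :=
    aux_small_comp cop hccpt (fun F => 1 - Pf F) hQnorm hstrong0
  -- C*-identity estimate
  have hb2 : ∀ F : Finset S, ‖b * (1 - Pf F)‖ * ‖b * (1 - Pf F)‖ ≤
      ‖((1 : H →L[ℂ] H) - Pf F).comp cop‖ := by
    intro F
    set Q : H →L[ℂ] H := 1 - Pf F with hQdef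
    have hstarQ : star Q = Q := by
      rw [ContinuousLinearMap.star_eq_adjoint]
      exact ((ContinuousLinearMap.eq_adjoint_iff Q Q).mpr (fun x y => hQsa F x y)).symm
    have hstarb : star b = ContinuousLinearMap.adjoint b :=
      ContinuousLinearMap.star_eq_adjoint b
    calc ‖b * Q‖ * ‖b * Q‖ = ‖star (b * Q) * (b * Q)‖ :=
          (CStarRing.norm_star_mul_self).symm
      _ = ‖(Q * cop) * Q‖ := by
          rw [star_mul, hstarQ, hstarb,
            show cop = ContinuousLinearMap.adjoint b * b from rfl]
          exact congrArg norm (by noncomm_ring)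
      _ ≤ ‖Q * cop‖ * ‖Q‖ := norm_mul_le _ _
      _ ≤ ‖Q * cop‖ * 1 := by
          gcongr
          exact hQnorm F
      _ = ‖Q.comp cop‖ := by rw [mul_one]; rfl
  -- norm convergence of b ∘ (1 - Pf F) to 0
  have hTnorm : Tendsto (fun F : Finset S => ‖b * (1 - Pf F)‖) atTop (𝓝 0) := by
    have hle : ∀ F : Finset S, ‖b * (1 - Pf F)‖ ≤
        Real.sqrt ‖((1 : H →L[ℂ] H) - Pf F).comp cop‖ := by
      intro F
      rw [← Real.sqrt_mul_self (norm_nonneg (b * (1 - Pf F)))]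
      exact Real.sqrt_le_sqrt (hb2 F)
    have hsq : Tendsto (fun F : Finset S =>
        Real.sqrt ‖((1 : H →L[ℂ] H) - Pf F).comp cop‖) atTop (𝓝 0) := by
      have := (Real.continuous_sqrt.tendsto 0).comp hnorm0
      rwa [Real.sqrt_zero] at this
    exact tendsto_of_tendsto_of_tendsto_of_le_of_le tendsto_const_nhds hsq
      (fun F => norm_nonneg _) hle
  -- b ∘ q s = b ∘ Psub s
  have hq' : ∀ s, b * q s = b * Psub s := by
    intro s
    haveI := hfin s
    haveI : CompleteSpace (Hsub s) := FiniteDimensional.complete ℂ (Hsub s)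
    ext v
    set w : H := Psub s v with hwdef
    have hmem : ∀ k, ρ k w ∈ Hsub s := fun k => hinv s k w (hP_mem s v)
    have hg : Continuous (fun k => (⟨ρ k w, hmem k⟩ : Hsub s)) :=
      (hcont w).subtype_mk _
    have hgint : Integrable (fun k => (⟨ρ k w, hmem k⟩ : Hsub s)) μ :=
      hg.integrable_of_hasCompactSupport (HasCompactSupport.of_compactSpace _)
    have hpmem : p w ∈ Hsub s := by
      rw [hp w]
      have hcomm := ContinuousLinearMap.integral_comp_comm (Hsub s).subtypeL hgint
      have : (fun k => (Hsub s).subtypeL (⟨ρ k w, hmem k⟩ : Hsub s)) = fun k => ρ k w := rfl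
      rw [this] at hcomm
      rw [hcomm]
      exact SetLike.coe_mem _
    have hint2 : Integrable (fun k => Psub s (ρ k w)) μ :=
      ContinuousLinearMap.integrable_comp (Psub s) (hInt w)
    have hqv : q s v = w - p w := by
      rw [hq s v, ← hwdef]
      rw [integral_sub (integrable_const w) hint2]
      rw [integral_const]
      simp only [probReal_univ, one_smul]
      rw [ContinuousLinearMap.integral_comp_comm (Psub s) (hInt w), ← hp w,
        hP_fix s _ hpmem]
    simp only [ContinuousLinearMap.mul_apply, hqv, map_sub, hbp, sub_zero, ← hwdef]
  refine ⟨h1, ?_⟩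
  have hsum : ∀ F : Finset S, ∑ s ∈ F, b * q s = b * Pf F := by
    intro F
    rw [hPfdef]
    rw [Finset.mul_sum]
    exact Finset.sum_congr rfl fun s _ => hq' s
  rw [HasSum]
  have hrw : (fun F : Finset S => ∑ s ∈ F, b * q s) = fun F => b * Pf F := funext hsum
  rw [hrw]
  rw [tendsto_iff_norm_sub_tendsto_zero]
  convert hTnorm using 2 with F
  rw [show b * Pf F - b = -(b * (1 - Pf F)) by rw [mul_sub, mul_one]; abel, norm_neg]
  rfl
end
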